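/- arXiv:2510.26380 — 2 statements merged into one kernel-verified Lean document; each statement's English description precedes it below -/
import Mathlib

section
/- Let (λ, μ) be a Lamé pair in dimension d, i.e. μ > 0 and dλ + 2μ > 0. Define the Lamé tensor A by A^{αβ}_{ij} = λ δ_{iα} δ_{jβ} + μ (δ_{ij} δ_{αβ} + δ_{iβ} δ_{jα}). Then for every matrix M ∈ ℝ^{d×d}, one has A M : M ≥ (min{dλ + 2μ, 2μ}/4) |M + Mᵀ|², where A M : M = Σ_{i,j,α,β} A^{αβ}_{ij} M^β_j M^α_i and |·| is the Frobenius norm. -/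
open Finset Matrix

/-- coercivity of the Lamé tensor on general matrices. -/
theorem lame_tensor_coercivity (d : ℕ) (lam mu : ℝ) (hmu : 0 < mu)
    (hlame : 0 < (d : ℝ) * lam + 2 * mu)
    (M : Matrix (Fin d) (Fin d) ℝ) :
    let δ : Fin d → Fin d → ℝ := fun i j => if i = j then 1 else 0
    (∑ i, ∑ j, ∑ a, ∑ b,
        (lam * δ i a * δ j b + mu * (δ i j * δ a b + δ i b * δ j a)) * M b j * M a i)
      ≥ min ((d : ℝ) * lam + 2 * mu) (2 * mu) / 4 *
        (∑ i, ∑ j, ((M + Mᵀ) i j) ^ 2) := by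
  intro δ
  set t : ℝ := ∑ i, M i i with ht
  set N : ℝ := ∑ i, ∑ j, (M i j)^2 with hN
  set Q : ℝ := ∑ i, ∑ j, M i j * M j i with hQ
  have hL : (∑ i, ∑ j, ∑ a, ∑ b,
        (lam * δ i a * δ j b + mu * (δ i j * δ a b + δ i b * δ j a)) * M b j * M a i)
      = lam * t^2 + mu * (N + Q) := by
    rw [ht, hN, hQ, mul_add]
    simp only [δ, mul_add, add_mul, mul_ite, ite_mul, mul_one, mul_zero, zero_mul, one_mul]
    simp only [Finset.sum_add_distrib, Finset.sum_ite_eq, Finset.sum_ite_eq',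
      Finset.mem_univ, if_true, Finset.sum_ite_irrel, Finset.sum_const_zero]
    have h1 : ∑ x : Fin d, ∑ y : Fin d, lam * M y y * M x x = lam * (∑ i, M i i)^2 := by
      rw [sq, Finset.sum_mul_sum, Finset.mul_sum]
      refine Finset.sum_congr rfl fun x _ => ?_
      rw [Finset.mul_sum]
      exact Finset.sum_congr rfl fun y _ => by ring
    have h2 : ∑ x : Fin d, ∑ y : Fin d, mu * M y x * M y x = mu * ∑ i, ∑ j, (M i j)^2 := by
      rw [Finset.sum_comm, Finset.mul_sum]
      refine Finset.sum_congr rfl fun x _ => ?_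
      rw [Finset.mul_sum]
      exact Finset.sum_congr rfl fun y _ => by ring
    have h3 : ∑ x : Fin d, ∑ y : Fin d, mu * M x y * M y x = mu * ∑ i, ∑ j, M i j * M j i := by
      rw [Finset.mul_sum]
      refine Finset.sum_congr rfl fun x _ => ?_
      rw [Finset.mul_sum]
      exact Finset.sum_congr rfl fun y _ => by ring
    rw [h1, h2, h3]
  have hR : (∑ i, ∑ j, ((M + Mᵀ) i j)^2) = 2*N + 2*Q := by
    simp only [Matrix.add_apply, Matrix.transpose_apply, add_sq]
    simp only [Finset.sum_add_distrib]
    have h1 : (∑ i : Fin d, ∑ j : Fin d, (M j i)^2) = N := by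
      rw [hN]; exact Finset.sum_comm
    have h2 : (∑ i : Fin d, ∑ j : Fin d, 2 * M i j * M j i) = 2 * Q := by
      rw [hQ, Finset.mul_sum]
      refine Finset.sum_congr rfl fun i _ => ?_
      rw [Finset.mul_sum]
      exact Finset.sum_congr rfl fun j _ => by ring
    rw [h1, h2, ← hN]
    ring
  have hNQ : 0 ≤ 2*N + 2*Q := by
    rw [← hR]; positivity
  have hCS : (2*t)^2 ≤ d * (2*N + 2*Q) := by
    have h1 : (∑ i, (M i i + M i i))^2 ≤ (d:ℝ) * ∑ i, (M i i + M i i)^2 := by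
      have := sq_sum_le_card_mul_sum_sq (s := (Finset.univ : Finset (Fin d)))
        (f := fun i => M i i + M i i)
      simpa using this
    have h2 : (∑ i, (M i i + M i i)^2) ≤ ∑ i, ∑ j, ((M + Mᵀ) i j)^2 := by
      apply Finset.sum_le_sum
      intro i _
      have : ((M + Mᵀ) i i)^2 ≤ ∑ j, ((M + Mᵀ) i j)^2 :=
        Finset.single_le_sum (f := fun j => ((M + Mᵀ) i j)^2)
          (fun j _ => sq_nonneg _) (Finset.mem_univ i)
      simpa [Matrix.add_apply] using this
    rw [hR] at h2
    calc (2*t)^2 = (∑ i, (M i i + M i i))^2 := by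
          rw [ht, Finset.sum_add_distrib]; ring
    _ ≤ (d:ℝ) * ∑ i, (M i i + M i i)^2 := h1
    _ ≤ d * (2*N + 2*Q) := mul_le_mul_of_nonneg_left h2 (by positivity)
  rw [hL, hR]
  rcases le_total ((d : ℝ) * lam + 2 * mu) (2*mu) with h | h
  · rw [min_eq_left h]
    rcases le_total lam 0 with hl | hl
    · nlinarith [mul_nonneg (neg_nonneg.2 hl) (sub_nonneg.2 hCS)]
    · have h0 : (d:ℝ) * lam = 0 :=
        le_antisymm (by linarith) (mul_nonneg (Nat.cast_nonneg d) hl)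
      rw [h0]
      nlinarith [mul_nonneg hl (sq_nonneg t)]
  · rw [min_eq_right h]
    rcases Nat.eq_zero_or_pos d with hd | hd
    · have ht0 : t = 0 := by rw [ht]; subst hd; simp
      rw [ht0]
      nlinarith
    · have hd' : (0:ℝ) < d := by exact_mod_cast hd
      have hl : 0 ≤ lam := by
        by_contra h'
        push_neg at h'
        nlinarith [mul_pos hd' (neg_pos.2 h')]
      nlinarith [mul_nonneg hl (sq_nonneg t)]
end

section
/- Let H and Q be Hilbert spaces, a : H × H → ℝ and b : H × Q → ℝ bounded bilinear forms, F ∈ H', G ∈ Q'. Assume (1) coercivity: there exists α > 0 with a(τ,τ) ≥ α‖τ‖²_H for all τ ∈ H; (2) inf-sup condition: there exists β > 0 with inf_{0≠v∈Q} sup_{0≠τ∈H} b(τ,v)/(‖τ‖_H ‖v‖_Q) ≥ β. Then the saddle-point problem a(σ,τ) + b(τ,u) = F(τ) for all τ ∈ H, b(σ,v) = G(v) for all v ∈ Q, has a unique solution (σ,u) ∈ H × Q, and ‖σ‖_H + ‖u‖_Q ≤ C(‖F‖_{H'} + ‖G‖_{Q'}) with C depending only on ‖a‖, α, β. -/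
/-!
Write the problem as `L (σ, u) = (F, G)` with `L (σ, u) = (a(σ, ·) + b(·, u), b(σ, ·))`.
`L` is injective: if `L (σ, u) = 0`, testing with `τ = σ` gives `a(σ, σ) = -b(σ, u) = 0`, so
`σ = 0` by coercivity, and then `b(·, u) = 0` forces `u = 0` by the inf-sup condition.
`L` is surjective: eliminating `σ = A⁻¹ (F - b(·, u))`, where `A⁻¹ : H' → H` inverts `a` by
Lax–Milgram, leaves the Schur complement `S(u, v) = b(A⁻¹ b(·, u), v)` on `Q`. With
`σ = A⁻¹ b(·, u)` we have `S(u, u) = a(σ, σ) ≥ α ‖σ‖²` and `β ‖u‖ ≤ ‖b(·, u)‖ ≤ ‖a‖ ‖σ‖`,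
so `S` is coercive and Lax–Milgram solves for `u`. The stability constant is then the norm of
`L⁻¹`, bounded by the open mapping theorem.
-/

open ContinuousLinearMap

namespace IsCoercive

variable {V : Type*} [NormedAddCommGroup V] [InnerProductSpace ℝ V] [CompleteSpace V]
  {B : V →L[ℝ] V →L[ℝ] ℝ} {Q : Type*} [NormedAddCommGroup Q] [NormedSpace ℝ Q]

theorem bijective (hB : IsCoercive B) : Function.Bijective B := by
  have hfactor : ⇑B = InnerProductSpace.toDual ℝ V ∘ hB.continuousLinearEquivOfBilin := by
    ext v w
    simp [InnerProductSpace.toDual_apply_apply]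
  rw [hfactor]
  exact (InnerProductSpace.toDual ℝ V).bijective.comp hB.continuousLinearEquivOfBilin.bijective

noncomputable def equivDual (hB : IsCoercive B) : V ≃L[ℝ] (V →L[ℝ] ℝ) :=
  ContinuousLinearEquiv.ofBijective B (LinearMap.ker_eq_bot.mpr hB.bijective.1)
    (LinearMap.range_eq_top.mpr hB.bijective.2)

noncomputable def schurComplement (hB : IsCoercive B) (b : V →L[ℝ] Q →L[ℝ] ℝ) :
    Q →L[ℝ] Q →L[ℝ] ℝ :=
  b ∘L (hB.equivDual.symm : (V →L[ℝ] ℝ) →L[ℝ] V) ∘L b.flip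

theorem schurComplement_apply (hB : IsCoercive B) (b : V →L[ℝ] Q →L[ℝ] ℝ) (u v : Q) :
    hB.schurComplement b u v = b (hB.equivDual.symm (b.flip u)) v := rfl

theorem isCoercive_schurComplement (hB : IsCoercive B) {b : V →L[ℝ] Q →L[ℝ] ℝ} {β : ℝ}
    (hβ : 0 < β) (hb : ∀ v : Q, β * ‖v‖ ≤ ‖b.flip v‖) : IsCoercive (hB.schurComplement b) := by
  obtain ⟨α, hα, hcoer⟩ := id hB
  set M := ‖B‖ + 1
  refine ⟨α * (β / M) ^ 2, by positivity, fun u => ?_⟩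
  set σ := hB.equivDual.symm (b.flip u)
  have hBσ : B σ = b.flip u := hB.equivDual.apply_symm_apply (b.flip u)
  have hσ : β * ‖u‖ / M ≤ ‖σ‖ := by
    rw [div_le_iff₀ (by positivity)]
    calc β * ‖u‖ ≤ ‖B σ‖ := hBσ ▸ hb u
      _ ≤ ‖B‖ * ‖σ‖ := B.le_opNorm σ
      _ ≤ ‖σ‖ * M := by nlinarith [norm_nonneg σ]
  calc α * (β / M) ^ 2 * ‖u‖ * ‖u‖ = α * (β * ‖u‖ / M) ^ 2 := by ring
    _ ≤ α * ‖σ‖ ^ 2 := by gcongr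
    _ = α * ‖σ‖ * ‖σ‖ := by ring
    _ ≤ B σ σ := hcoer σ
    _ = hB.schurComplement b u u := by rw [hBσ, flip_apply, schurComplement_apply]

end IsCoercive

theorem ContinuousLinearMap.iSup_div_norm_le_opNorm {E : Type*} [NormedAddCommGroup E]
    [NormedSpace ℝ E] (f : E →L[ℝ] ℝ) : ⨆ x : {x : E // x ≠ 0}, f x / ‖x.1‖ ≤ ‖f‖ := by
  refine Real.iSup_le (fun ⟨x, hx⟩ => ?_) (norm_nonneg f)
  rw [div_le_iff₀ (norm_pos_iff.mpr hx)]
  exact (le_abs_self _).trans (f.le_opNorm x)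

section SaddlePoint

variable {H Q : Type*} [NormedAddCommGroup H] [NormedSpace ℝ H]
  [NormedAddCommGroup Q] [NormedSpace ℝ Q] (a : H →L[ℝ] H →L[ℝ] ℝ) (b : H →L[ℝ] Q →L[ℝ] ℝ)

noncomputable def saddlePointMap : H × Q →L[ℝ] (H →L[ℝ] ℝ) × (Q →L[ℝ] ℝ) :=
  (a ∘L fst ℝ H Q + b.flip ∘L snd ℝ H Q).prod (b ∘L fst ℝ H Q)

theorem saddlePointMap_eq_iff (p : H × Q) (F : H →L[ℝ] ℝ) (G : Q →L[ℝ] ℝ) :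
    saddlePointMap a b p = (F, G) ↔
      (∀ τ : H, a p.1 τ + b τ p.2 = F τ) ∧ ∀ v : Q, b p.1 v = G v := by
  simp [saddlePointMap, Prod.ext_iff, ContinuousLinearMap.ext_iff]

variable {a b}

theorem injective_saddlePointMap (ha : IsCoercive a) {β : ℝ} (hβ : 0 < β)
    (hb : ∀ v : Q, β * ‖v‖ ≤ ‖b.flip v‖) : Function.Injective (saddlePointMap a b) := by
  obtain ⟨C, hC, hcoer⟩ := ha
  rw [injective_iff_map_eq_zero]
  rintro ⟨σ, u⟩ hp
  obtain ⟨h₁, h₂⟩ := (saddlePointMap_eq_iff a b _ 0 0).mp hp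
  have hσ : σ = 0 := by
    by_contra hσ
    have haσ : a σ σ = 0 := by simpa [h₂ u] using h₁ σ
    have : 0 < C * ‖σ‖ * ‖σ‖ := by have := norm_pos_iff.mpr hσ; positivity
    linarith [hcoer σ]
  subst hσ
  have hbu : b.flip u = 0 := by ext τ; simpa using h₁ τ
  have : β * ‖u‖ ≤ 0 := by simpa [hbu] using hb u
  simpa using nonpos_of_mul_nonpos_right this hβ

end SaddlePoint

theorem surjective_saddlePointMap {H Q : Type*} [NormedAddCommGroup H] [InnerProductSpace ℝ H]
    [CompleteSpace H] [NormedAddCommGroup Q] [InnerProductSpace ℝ Q] [CompleteSpace Q]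
    {a : H →L[ℝ] H →L[ℝ] ℝ} {b : H →L[ℝ] Q →L[ℝ] ℝ} (ha : IsCoercive a)
    {β : ℝ} (hβ : 0 < β) (hb : ∀ v : Q, β * ‖v‖ ≤ ‖b.flip v‖) :
    Function.Surjective (saddlePointMap a b) := by
  rintro ⟨F, G⟩
  let e := ha.equivDual
  obtain ⟨u, hu⟩ := (ha.isCoercive_schurComplement hβ hb).bijective.2 (b (e.symm F) - G)
  refine ⟨(e.symm (F - b.flip u), u),
    (saddlePointMap_eq_iff a b _ F G).mpr ⟨fun τ => ?_, fun v => ?_⟩⟩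
  · change e (e.symm _) τ + _ = _
    simp
  · have huv := congr($hu v)
    simp only [IsCoercive.schurComplement_apply, sub_apply] at huv
    simp only [map_sub, sub_apply]
    linarith

theorem ContinuousLinearMap.exists_norm_add_norm_le_of_bijective {𝕜 E F X Y : Type*}
    [NontriviallyNormedField 𝕜]
    [NormedAddCommGroup E] [NormedSpace 𝕜 E] [CompleteSpace E]
    [NormedAddCommGroup F] [NormedSpace 𝕜 F] [CompleteSpace F]
    [NormedAddCommGroup X] [NormedSpace 𝕜 X] [CompleteSpace X]
    [NormedAddCommGroup Y] [NormedSpace 𝕜 Y] [CompleteSpace Y]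
    (L : (E × F) →L[𝕜] (X × Y)) (hL : Function.Bijective L) :
    ∃ C > 0, ∀ p : E × F, ‖p.1‖ + ‖p.2‖ ≤ C * (‖(L p).1‖ + ‖(L p).2‖) := by
  let e := ContinuousLinearEquiv.ofBijective L (LinearMap.ker_eq_bot.mpr hL.1)
    (LinearMap.range_eq_top.mpr hL.2)
  set K := ‖(e.symm : (X × Y) →L[𝕜] (E × F))‖
  refine ⟨2 * K + 1, by positivity, fun p => ?_⟩
  have hLp : ‖L p‖ ≤ ‖(L p).1‖ + ‖(L p).2‖ :=
    max_le_add_of_nonneg (norm_nonneg _) (norm_nonneg _)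
  calc ‖p.1‖ + ‖p.2‖ ≤ 2 * ‖p‖ := by linarith [_root_.norm_fst_le p, _root_.norm_snd_le p]
    _ = 2 * ‖(e.symm : (X × Y) →L[𝕜] (E × F)) (L p)‖ := by
      simp [e, ContinuousLinearEquiv.ofBijective_symm_apply_apply]
    _ ≤ 2 * (K * ‖L p‖) := by gcongr; exact le_opNorm _ _
    _ ≤ 2 * (K * (‖(L p).1‖ + ‖(L p).2‖)) := by gcongr
    _ ≤ (2 * K + 1) * (‖(L p).1‖ + ‖(L p).2‖) := by
      nlinarith [norm_nonneg (L p).1, norm_nonneg (L p).2]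

/-- the Babuška–Brezzi theorem for mixed saddle-point problems. -/
theorem babuska_brezzi
    (H Q : Type*) [NormedAddCommGroup H] [InnerProductSpace ℝ H] [CompleteSpace H]
    [NormedAddCommGroup Q] [InnerProductSpace ℝ Q] [CompleteSpace Q]
    (a : H →L[ℝ] H →L[ℝ] ℝ) (b : H →L[ℝ] Q →L[ℝ] ℝ)
    (α : ℝ) (hα : 0 < α) (hcoer : ∀ τ : H, α * ‖τ‖ ^ 2 ≤ a τ τ)
    (β : ℝ) (hβ : 0 < β)
    (hinfsup : ∀ v : Q, v ≠ 0 → β * ‖v‖ ≤ ⨆ τ : {τ : H // τ ≠ 0}, b τ.1 v / ‖τ.1‖) :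
    ∃ C : ℝ, 0 < C ∧ ∀ (F : H →L[ℝ] ℝ) (G : Q →L[ℝ] ℝ),
      (∃! p : H × Q, (∀ τ : H, a p.1 τ + b τ p.2 = F τ) ∧ (∀ v : Q, b p.1 v = G v)) ∧
      ∀ p : H × Q, ((∀ τ : H, a p.1 τ + b τ p.2 = F τ) ∧ (∀ v : Q, b p.1 v = G v)) →
        ‖p.1‖ + ‖p.2‖ ≤ C * (‖F‖ + ‖G‖) := by
  have ha : IsCoercive a := ⟨α, hα, fun τ => by simpa [sq, mul_assoc] using hcoer τ⟩
  have hb : ∀ v : Q, β * ‖v‖ ≤ ‖b.flip v‖ := by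
    intro v
    rcases eq_or_ne v 0 with rfl | hv
    · simp
    · exact (hinfsup v hv).trans (b.flip v).iSup_div_norm_le_opNorm
  have hbij : Function.Bijective (saddlePointMap a b) :=
    ⟨injective_saddlePointMap ha hβ hb, surjective_saddlePointMap ha hβ hb⟩
  obtain ⟨C, hC, hbound⟩ := (saddlePointMap a b).exists_norm_add_norm_le_of_bijective hbij
  refine ⟨C, hC, fun F G => ⟨?_, fun p hp => ?_⟩⟩
  · simp_rw [← saddlePointMap_eq_iff]
    exact hbij.existsUnique (F, G)
  · rw [← saddlePointMap_eq_iff] at hp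
    simpa [hp] using hbound p
end
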